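/- Fix $\epsilon > 0$. Let $T_0$ be the number of triangles in $G(n,p)$ having at least one bad edge but all three vertices good. There is a constant $C(\epsilon) > 0$ depending only on $\epsilon$ such that whenever $C(\epsilon)^{-1} n^{-1}\log n \le p \le C(\epsilon)$, $\mathbb{P}(T_0 > 15\epsilon n^3 p^3) \le e^{-C(\epsilon) n^2 p^2 \log(1/p)}$. -/

import Mathlib

open MeasureTheory ProbabilityTheory Real
open scoped Classical ENNReal NNReal

/-- The Erdős–Rényi random graph measure: each (non-diagonal) unordered pair of vertices of
`Fin n` is an edge independently with probability `p`. The sample space records, for each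
unordered pair, whether it is an edge. -/
noncomputable def erMeasure (n : ℕ) (p : ℝ≥0) (hp : p ≤ 1) :
    Measure (Sym2 (Fin n) → Bool) :=
  Measure.pi fun _ => (PMF.bernoulli p hp).toMeasure

/-- Adjacency in the realization `ω`. -/
def Adj {n : ℕ} (ω : Sym2 (Fin n) → Bool) (u v : Fin n) : Prop :=
  u ≠ v ∧ ω s(u, v) = true

/-- The degree of a vertex. -/
noncomputable def deg {n : ℕ} (ω : Sym2 (Fin n) → Bool) (u : Fin n) : ℕ :=
  (Finset.univ.filter (fun v => Adj ω u v)).card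

/-- `t` is a triangle: a set of three pairwise adjacent vertices. -/
def IsTriangle {n : ℕ} (ω : Sym2 (Fin n) → Bool) (t : Finset (Fin n)) : Prop :=
  t.card = 3 ∧ ∀ u ∈ t, ∀ v ∈ t, u ≠ v → Adj ω u v

/-- The number of triangles. -/
noncomputable def triangleCount {n : ℕ} (ω : Sym2 (Fin n) → Bool) : ℕ :=
  (Finset.univ.filter (fun t : Finset (Fin n) => IsTriangle ω t)).card

/-- `e` is an edge of the graph. -/
def IsEdge {n : ℕ} (ω : Sym2 (Fin n) → Bool) (e : Sym2 (Fin n)) : Prop :=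
  ¬ e.IsDiag ∧ ω e = true

/-- The number of triangles containing both endpoints of `e`. -/
noncomputable def triOnEdge {n : ℕ} (ω : Sym2 (Fin n) → Bool) (e : Sym2 (Fin n)) : ℕ :=
  (Finset.univ.filter (fun t : Finset (Fin n) => IsTriangle ω t ∧ ∀ u ∈ e, u ∈ t)).card

/-- A good edge: an edge of the graph contained in fewer than `ε ℓ n p` triangles,
where `ℓ = 1 / log(1/p)`. -/
def GoodEdge {n : ℕ} (ε p : ℝ) (ω : Sym2 (Fin n) → Bool) (e : Sym2 (Fin n)) : Prop :=
  IsEdge ω e ∧ (triOnEdge ω e : ℝ) < ε * (1 / Real.log (1 / p)) * n * p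

/-- A bad edge: an edge of the graph that is not good. -/
def BadEdge {n : ℕ} (ε p : ℝ) (ω : Sym2 (Fin n) → Bool) (e : Sym2 (Fin n)) : Prop :=
  IsEdge ω e ∧ ¬ ((triOnEdge ω e : ℝ) < ε * (1 / Real.log (1 / p)) * n * p)

/-- A good vertex: one with fewer than `7np` neighbors. -/
def GoodVertex {n : ℕ} (p : ℝ) (ω : Sym2 (Fin n) → Bool) (u : Fin n) : Prop :=
  (deg ω u : ℝ) < 7 * n * p

/-- `T'`: the number of triangles all of whose edges are good. -/
noncomputable def triGoodEdges {n : ℕ} (ε p : ℝ) (ω : Sym2 (Fin n) → Bool) : ℕ :=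
  (Finset.univ.filter (fun t : Finset (Fin n) => IsTriangle ω t ∧
    ∀ u ∈ t, ∀ v ∈ t, u ≠ v → GoodEdge ε p ω s(u, v))).card

/-- `T₀`: the number of triangles with at least one bad edge but all good vertices. -/
noncomputable def triBadEdgeGoodVerts {n : ℕ} (ε p : ℝ) (ω : Sym2 (Fin n) → Bool) : ℕ :=
  (Finset.univ.filter (fun t : Finset (Fin n) => IsTriangle ω t ∧
    (∃ u ∈ t, ∃ v ∈ t, u ≠ v ∧ BadEdge ε p ω s(u, v)) ∧
    ∀ u ∈ t, GoodVertex p ω u)).card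

/-- The number of triangles with exactly `k` bad vertices. -/
noncomputable def triBadVerts {n : ℕ} (p : ℝ) (k : ℕ) (ω : Sym2 (Fin n) → Bool) : ℕ :=
  (Finset.univ.filter (fun t : Finset (Fin n) => IsTriangle ω t ∧
    (t.filter (fun u => ¬ GoodVertex p ω u)).card = k)).card

/-- `t_{uv}` for `e = {u,v}`: the number of common neighbors of `u` and `v` outside `{u,v}`. -/
noncomputable def commonNbrs {n : ℕ} (ω : Sym2 (Fin n) → Bool) (e : Sym2 (Fin n)) : ℕ :=
  (Finset.univ.filter (fun w => w ∉ e ∧ ∀ u ∈ e, Adj ω u w)).card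

/-- A matching: a collection of non-diagonal unordered pairs, no two of which share a vertex. -/
def IsMatching {n : ℕ} (A : Finset (Sym2 (Fin n))) : Prop :=
  (∀ e ∈ A, ¬ e.IsDiag) ∧ ∀ e ∈ A, ∀ f ∈ A, e ≠ f → ∀ v : Fin n, v ∈ e → v ∉ f

/-!
Every triangle counted by `T₀` lies on a bad edge with good endpoints. Weight such edges by
their triangle counts; a maximum-weight matching `M` among them dominates the weight of each
one by the edges of `M` it meets, and each edge of `M` meets at most `14 n p` of them, so if
`T₀ > 15 ε n³ p³` then the edges of `M` lie in `≥ ε n² p²` triangles. When `M` has more than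
`a ≈ n p log (1 / p)` edges, any `a` of them already do, as a bad edge lies in
`≥ ε n p / log (1 / p)` triangles. For a fixed matching `A` of size `a`, `3 r` common
neighbours of its edges force `r` disjoint pairs of edges from the edges of `A` to vertices
outside `A` (probability `≤ C(a n, r) p^{2r}`) or `r` edges inside the vertices of `A`
(probability `≤ C(4a², r) p^r`). With `r ≈ ε n² p² / 3` both are at most `p^{r/2}`, which
beats the `n^{O(a)}` matchings when `p` is small.
-/

open Finset

section Counting

theorem Sym2.card_toFinset_le_two {α : Type*} [DecidableEq α] (z : Sym2 α) :
    #z.toFinset ≤ 2 := by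
  rw [Sym2.card_toFinset]
  split_ifs <;> simp

theorem card_sym2_le_sq {α : Type*} [DecidableEq α] (s : Finset α) : #s.sym2 ≤ #s ^ 2 := by
  rw [sym2_eq_image, sq, ← card_product]
  exact card_image_le

theorem card_filter_card_le {α : Type*} [Fintype α] (hα : 0 < Fintype.card α) (a : ℕ) :
    #{A : Finset α | #A ≤ a} ≤ (a + 1) * Fintype.card α ^ a := by
  have hsub : ({A | #A ≤ a} : Finset (Finset α)) ⊆
      (range (a + 1)).biUnion fun j => univ.powersetCard j :=
    fun A hA => mem_biUnion.2 ⟨#A, mem_range.2 (Nat.lt_succ_of_le (mem_filter.1 hA).2),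
      mem_powersetCard.2 ⟨subset_univ A, rfl⟩⟩
  refine (card_le_card hsub).trans <| card_biUnion_le.trans ?_
  calc ∑ j ∈ range (a + 1), #(univ.powersetCard j : Finset (Finset α))
      ≤ ∑ _j ∈ range (a + 1), Fintype.card α ^ a := by
        refine sum_le_sum fun j hj => ?_
        rw [card_powersetCard, card_univ]
        exact (Nat.choose_le_pow _ _).trans (Nat.pow_le_pow_right hα (Nat.lt_succ_iff.1
          (mem_range.1 hj)))
    _ = (a + 1) * Fintype.card α ^ a := by rw [sum_const, card_range, smul_eq_mul]

theorem card_sym2_fin_le (n : ℕ) : Fintype.card (Sym2 (Fin n)) ≤ n ^ 2 := by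
  rw [← card_univ, ← sym2_univ]
  simpa using card_sym2_le_sq (univ : Finset (Fin n))

end Counting

section Probability

variable {n : ℕ} {p : ℝ≥0} (hp : p ≤ 1)

theorem erMeasure_forall_true (F : Finset (Sym2 (Fin n))) :
    erMeasure n p hp {ω | ∀ f ∈ F, ω f = true} = (p : ℝ≥0∞) ^ #F := by
  have hset : {ω : Sym2 (Fin n) → Bool | ∀ f ∈ F, ω f = true} =
      Set.univ.pi fun f => if f ∈ F then {true} else Set.univ := by
    ext ω
    simp only [Set.mem_pi, Set.mem_univ, true_implies]
    refine forall_congr' fun f => ?_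
    split_ifs <;> simp [*]
  rw [erMeasure, hset, Measure.pi_pi, ← prod_const, ← Fintype.prod_ite_mem F]
  refine Fintype.prod_congr _ _ fun f => ?_
  split_ifs
  · rw [PMF.toMeasure_apply_singleton _ _ (measurableSet_singleton _)]
    rfl
  · exact measure_univ

/-- If at least `r` of the disjoint sets `g i` consist of edges, then so do all `≥ c r` pairs of
the union of some `r` of them. -/
theorem erMeasure_le_choose_mul_pow {ι : Type*} (D : Finset ι) (g : ι → Finset (Sym2 (Fin n)))
    (hdisj : (D : Set ι).PairwiseDisjoint g) (c r : ℕ) (hc : ∀ i ∈ D, c ≤ #(g i)) :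
    erMeasure n p hp {ω | r ≤ #{i ∈ D | ∀ f ∈ g i, ω f = true}}
      ≤ ((#D).choose r : ℝ≥0∞) * (p : ℝ≥0∞) ^ (c * r) := by
  have hsub : {ω : Sym2 (Fin n) → Bool | r ≤ #{i ∈ D | ∀ f ∈ g i, ω f = true}}
      ⊆ ⋃ T ∈ D.powersetCard r, {ω | ∀ f ∈ T.biUnion g, ω f = true} := by
    intro ω hω
    obtain ⟨T, hTsub, hTcard⟩ := exists_subset_card_eq hω
    refine Set.mem_biUnion (mem_powersetCard.2 ⟨hTsub.trans (filter_subset _ _), hTcard⟩) ?_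
    intro f hf
    obtain ⟨i, hi, hfi⟩ := mem_biUnion.1 hf
    exact (mem_filter.1 (hTsub hi)).2 f hfi
  have hbound : ∀ T ∈ D.powersetCard r,
      erMeasure n p hp {ω | ∀ f ∈ T.biUnion g, ω f = true} ≤ (p : ℝ≥0∞) ^ (c * r) := by
    intro T hT
    obtain ⟨hTD, hTcard⟩ := mem_powersetCard.1 hT
    have hcard : c * r ≤ #(T.biUnion g) := by
      rw [card_biUnion (hdisj.subset (coe_subset.2 hTD)), ← hTcard, mul_comm, ← smul_eq_mul,
        ← sum_const]
      exact sum_le_sum fun i hi => hc i (hTD hi)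
    rw [erMeasure_forall_true]
    exact pow_le_pow_of_le_one zero_le (by exact_mod_cast hp) hcard
  calc erMeasure n p hp {ω | r ≤ #{i ∈ D | ∀ f ∈ g i, ω f = true}}
      ≤ ∑ T ∈ D.powersetCard r, erMeasure n p hp {ω | ∀ f ∈ T.biUnion g, ω f = true} :=
        (measure_mono hsub).trans (measure_biUnion_finset_le _ _)
    _ ≤ ∑ _T ∈ D.powersetCard r, (p : ℝ≥0∞) ^ (c * r) := sum_le_sum hbound
    _ = ((#D).choose r : ℝ≥0∞) * (p : ℝ≥0∞) ^ (c * r) := by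
        rw [sum_const, nsmul_eq_mul, card_powersetCard]

end Probability

section Graph

variable {n : ℕ} (ω : Sym2 (Fin n) → Bool)

theorem card_edges_mem_le_deg (x : Fin n) : #{e | x ∈ e ∧ IsEdge ω e} ≤ deg ω x := by
  refine (card_le_card fun e he => ?_).trans (card_image_le (f := fun v => s(x, v)))
  obtain ⟨hx, hdiag, hω⟩ := (mem_filter.1 he).2
  have hxe := Sym2.other_spec' hx
  refine mem_image.2 ⟨_, mem_filter.2 ⟨mem_univ _, fun h => hdiag ?_, ?_⟩, hxe⟩
  · rw [← hxe, ← h]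
    exact Sym2.mk_isDiag_iff.2 rfl
  · rwa [hxe]

theorem triOnEdge_le_commonNbrs {e : Sym2 (Fin n)} (he : ¬ e.IsDiag) :
    triOnEdge ω e ≤ commonNbrs ω e := by
  refine (card_le_card fun t ht => ?_).trans (card_image_le (f := fun w => insert w e.toFinset))
  obtain ⟨⟨htcard, hadj⟩, het⟩ := (mem_filter.1 ht).2
  have het' : e.toFinset ⊆ t := fun u hu => het u (Sym2.mem_toFinset.1 hu)
  have hecard := Sym2.card_toFinset_of_not_isDiag e he
  obtain ⟨w, hwt, hwe⟩ := exists_of_ssubset (het'.ssubset_of_ne (by rintro rfl; omega))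
  rw [Sym2.mem_toFinset] at hwe
  refine mem_image.2 ⟨w, mem_filter.2 ⟨mem_univ _, hwe, fun u hu => ?_⟩, ?_⟩
  · exact hadj u (het u hu) w hwt (by rintro rfl; exact hwe hu)
  · refine eq_of_subset_of_card_le (insert_subset hwt het') ?_
    rw [card_insert_of_notMem (by rwa [Sym2.mem_toFinset]), hecard, htcard]

theorem triBadEdgeGoodVerts_eq_zero (hn : n < 3) (ε P : ℝ) :
    triBadEdgeGoodVerts ε P ω = 0 := by
  refine card_eq_zero.2 (filter_eq_empty_iff.2 fun t _ ht => ?_)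
  have := card_le_univ t
  rw [Fintype.card_fin, ht.1.1] at this
  omega

end Graph

section Matching

variable {n : ℕ}

theorem IsMatching.subset {A B : Finset (Sym2 (Fin n))} (hB : IsMatching B) (h : A ⊆ B) :
    IsMatching A :=
  ⟨fun e he => hB.1 e (h he), fun e he f hf hef => hB.2 e (h he) f (h hf) hef⟩

theorem IsMatching.insert_filter_not_meets {M : Finset (Sym2 (Fin n))} (hM : IsMatching M)
    {e : Sym2 (Fin n)} (he : ¬ e.IsDiag) :
    IsMatching (insert e {f ∈ M | ¬ ∃ v ∈ e, v ∈ f}) := by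
  refine ⟨fun f hf => ?_, fun f₁ h₁ f₂ h₂ h12 v hv₁ hv₂ => ?_⟩
  · rcases mem_insert.1 hf with rfl | hf
    exacts [he, hM.1 f (mem_filter.1 hf).1]
  rcases mem_insert.1 h₁ with rfl | h₁ <;> rcases mem_insert.1 h₂ with rfl | h₂
  · exact h12 rfl
  · exact (mem_filter.1 h₂).2 ⟨v, hv₁, hv₂⟩
  · exact (mem_filter.1 h₁).2 ⟨v, hv₂, hv₁⟩
  · exact hM.2 f₁ (mem_filter.1 h₁).1 f₂ (mem_filter.1 h₂).1 h12 v hv₁ hv₂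

/-- A maximum-weight matching `M` inside `S` dominates every `e ∈ S` by the edges of `M` it
meets, since otherwise exchanging those edges for `e` would increase the weight. -/
theorem exists_isMatching_sum_le_sum_card_mul (S : Finset (Sym2 (Fin n)))
    (hS : ∀ e ∈ S, ¬ e.IsDiag) (w : Sym2 (Fin n) → ℕ) :
    ∃ M ⊆ S, IsMatching M ∧
      ∑ e ∈ S, w e ≤ ∑ f ∈ M, #{e ∈ S | ∃ v ∈ e, v ∈ f} * w f := by
  have hne : {M ∈ S.powerset | IsMatching M}.Nonempty :=
    ⟨∅, mem_filter.2 ⟨empty_mem_powerset S, by simp [IsMatching]⟩⟩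
  obtain ⟨M, hM, hmax⟩ := exists_max_image _ (fun M => ∑ f ∈ M, w f) hne
  obtain ⟨hMS, hMm⟩ := mem_filter.1 hM
  rw [mem_powerset] at hMS
  have hdom : ∀ e ∈ S, w e ≤ ∑ f ∈ M with ∃ v ∈ e, v ∈ f, w f := by
    intro e heS
    by_cases heM : e ∈ M
    · obtain ⟨v, hv⟩ : ∃ v, v ∈ e := ⟨_, Sym2.out_fst_mem e⟩
      exact single_le_sum (f := w) (fun _ _ => Nat.zero_le _)
        (mem_filter.2 ⟨heM, v, hv, hv⟩)
    · have hle := hmax _ (mem_filter.2 ⟨mem_powerset.2 (insert_subset heS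
        ((filter_subset _ _).trans hMS)), hMm.insert_filter_not_meets (hS e heS)⟩)
      rw [sum_insert fun h => heM (mem_filter.1 h).1] at hle
      have hsplit := sum_filter_add_sum_filter_not M (fun f => ∃ v ∈ e, v ∈ f) w
      omega
  refine ⟨M, hMS, hMm, (sum_le_sum hdom).trans_eq ?_⟩
  simp_rw [sum_filter]
  rw [sum_comm]
  refine sum_congr rfl fun f _ => ?_
  rw [← sum_filter, sum_const, smul_eq_mul]

end Matching

section Extraction

variable {n : ℕ} (ε P : ℝ) (ω : Sym2 (Fin n) → Bool)

noncomputable def badGoodEdges : Finset (Sym2 (Fin n)) :=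
  {e | BadEdge ε P ω e ∧ ∀ x ∈ e, GoodVertex P ω x}

theorem triBadEdgeGoodVerts_le_sum_triOnEdge :
    triBadEdgeGoodVerts ε P ω ≤ ∑ e ∈ badGoodEdges ε P ω, triOnEdge ω e := by
  refine (card_le_card fun t ht => ?_).trans card_biUnion_le
  obtain ⟨htri, ⟨u, hu, v, hv, -, hbad⟩, hgood⟩ := (mem_filter.1 ht).2
  have huv : ∀ x ∈ s(u, v), x ∈ t := by
    intro x hx
    rcases Sym2.mem_iff.1 hx with rfl | rfl <;> assumption
  exact mem_biUnion.2 ⟨s(u, v),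
    mem_filter.2 ⟨mem_univ _, hbad, fun x hx => hgood x (huv x hx)⟩,
    mem_filter.2 ⟨mem_univ _, htri, huv⟩⟩

theorem card_meets_badGoodEdges_le {f : Sym2 (Fin n)} (hf : f ∈ badGoodEdges ε P ω) :
    (#{e ∈ badGoodEdges ε P ω | ∃ v ∈ e, v ∈ f} : ℝ) ≤ 14 * n * P := by
  have hsub : {e ∈ badGoodEdges ε P ω | ∃ v ∈ e, v ∈ f} ⊆
      f.toFinset.biUnion fun u => {e | u ∈ e ∧ IsEdge ω e} := by
    intro e he
    obtain ⟨heS, v, hve, hvf⟩ := mem_filter.1 he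
    exact mem_biUnion.2 ⟨v, Sym2.mem_toFinset.2 hvf,
      mem_filter.2 ⟨mem_univ _, hve, (mem_filter.1 heS).2.1.1⟩⟩
  have hcard : #{e ∈ badGoodEdges ε P ω | ∃ v ∈ e, v ∈ f} ≤ ∑ u ∈ f.toFinset, deg ω u :=
    (card_le_card hsub).trans <| card_biUnion_le.trans <|
      sum_le_sum fun u _ => card_edges_mem_le_deg ω u
  have hgood : ∀ u ∈ f.toFinset, (deg ω u : ℝ) ≤ 7 * n * P :=
    fun u hu => ((mem_filter.1 hf).2.2 u (Sym2.mem_toFinset.1 hu)).le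
  have htwo : (#f.toFinset : ℝ) ≤ 2 := by exact_mod_cast f.card_toFinset_le_two
  calc (#{e ∈ badGoodEdges ε P ω | ∃ v ∈ e, v ∈ f} : ℝ)
      ≤ ∑ u ∈ f.toFinset, (deg ω u : ℝ) := by exact_mod_cast hcard
    _ ≤ #f.toFinset * (7 * n * P) := by
        simpa only [sum_const, nsmul_eq_mul] using sum_le_sum hgood
    _ ≤ 2 * (7 * n * P) := by
        gcongr
        exact (Nat.cast_nonneg _).trans (hgood _ (Sym2.mem_toFinset.2 (Sym2.out_fst_mem f)))
    _ = 14 * n * P := by ring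

theorem exists_isMatching_triBadEdgeGoodVerts_le :
    ∃ M ⊆ badGoodEdges ε P ω, IsMatching M ∧
      (triBadEdgeGoodVerts ε P ω : ℝ) ≤ 14 * n * P * ∑ f ∈ M, (triOnEdge ω f : ℝ) := by
  obtain ⟨M, hMS, hM, hsum⟩ := exists_isMatching_sum_le_sum_card_mul (badGoodEdges ε P ω)
    (fun e he => (mem_filter.1 he).2.1.1.1) (triOnEdge ω)
  refine ⟨M, hMS, hM, ?_⟩
  calc (triBadEdgeGoodVerts ε P ω : ℝ)
      ≤ ∑ f ∈ M, (#{e ∈ badGoodEdges ε P ω | ∃ v ∈ e, v ∈ f} : ℝ) * triOnEdge ω f := by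
        exact_mod_cast (triBadEdgeGoodVerts_le_sum_triOnEdge ε P ω).trans hsum
    _ ≤ ∑ f ∈ M, 14 * n * P * (triOnEdge ω f : ℝ) :=
        sum_le_sum fun f hf => mul_le_mul_of_nonneg_right
          (card_meets_badGoodEdges_le ε P ω (hMS hf)) (Nat.cast_nonneg _)
    _ = 14 * n * P * ∑ f ∈ M, (triOnEdge ω f : ℝ) := by rw [mul_sum]

theorem exists_isMatching_le_sum_commonNbrs (hε : 0 < ε) (hn : 0 < n) (hP0 : 0 < P) (hP1 : P < 1)
    {a : ℕ} (ha : n * P * Real.log (1 / P) ≤ a)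
    (hT : 15 * ε * (n : ℝ) ^ 3 * P ^ 3 < triBadEdgeGoodVerts ε P ω) :
    ∃ A, IsMatching A ∧ #A ≤ a ∧ ε * (n : ℝ) ^ 2 * P ^ 2 ≤ ∑ f ∈ A, (commonNbrs ω f : ℝ) := by
  obtain ⟨M, hMS, hM, hW⟩ := exists_isMatching_triBadEdgeGoodVerts_le ε P ω
  have htri : ∀ A ⊆ M, ∑ f ∈ A, (triOnEdge ω f : ℝ) ≤ ∑ f ∈ A, (commonNbrs ω f : ℝ) :=
    fun A hA => sum_le_sum fun f hf => by
      exact_mod_cast triOnEdge_le_commonNbrs ω (hM.1 f (hA hf))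
  by_cases hMa : #M ≤ a
  · refine ⟨M, hM, hMa, le_trans ?_ (htri M subset_rfl)⟩
    refine le_of_mul_le_mul_left ?_ (by positivity : (0 : ℝ) < 14 * (n * P))
    nlinarith [show 0 ≤ ε * (n : ℝ) ^ 3 * P ^ 3 by positivity]
  · obtain ⟨A, hAM, hAcard⟩ := exists_subset_card_eq (le_of_not_ge hMa)
    refine ⟨A, hM.subset hAM, hAcard.le, le_trans ?_ (htri A hAM)⟩
    have hL : 0 < Real.log (1 / P) := Real.log_pos (one_lt_one_div hP0 hP1)
    have hbad : ∀ f ∈ A, ε * (1 / Real.log (1 / P)) * n * P ≤ triOnEdge ω f :=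
      fun f hf => not_lt.1 (mem_filter.1 (hMS (hAM hf))).2.1.2
    calc ε * (n : ℝ) ^ 2 * P ^ 2
        = n * P * Real.log (1 / P) * (ε * (1 / Real.log (1 / P)) * n * P) := by
          field_simp
      _ ≤ a * (ε * (1 / Real.log (1 / P)) * n * P) := by
          gcongr
      _ = ∑ _f ∈ A, ε * (1 / Real.log (1 / P)) * n * P := by
          rw [sum_const, hAcard, nsmul_eq_mul]
      _ ≤ ∑ f ∈ A, (triOnEdge ω f : ℝ) := sum_le_sum hbad

end Extraction

section FixedMatching

variable {n : ℕ} (A : Finset (Sym2 (Fin n)))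

def matchingVerts : Finset (Fin n) := A.biUnion Sym2.toFinset

def spokes (q : Sym2 (Fin n) × Fin n) : Finset (Sym2 (Fin n)) :=
  q.1.toFinset.image fun u => s(u, q.2)

theorem mem_matchingVerts {f : Sym2 (Fin n)} (hf : f ∈ A) {u : Fin n} (hu : u ∈ f) :
    u ∈ matchingVerts A :=
  mem_biUnion.2 ⟨f, hf, Sym2.mem_toFinset.2 hu⟩

theorem card_matchingVerts_le : #(matchingVerts A) ≤ 2 * #A := by
  calc #(matchingVerts A) ≤ ∑ f ∈ A, #f.toFinset := card_biUnion_le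
    _ ≤ ∑ _f ∈ A, 2 := sum_le_sum fun f _ => f.card_toFinset_le_two
    _ = 2 * #A := by rw [sum_const, smul_eq_mul, mul_comm]

variable {A}

theorem card_spokes {q : Sym2 (Fin n) × Fin n} (hq : ¬ q.1.IsDiag) : #(spokes q) = 2 := by
  rw [spokes, card_image_of_injective _ fun u u' h => Sym2.congr_left.1 h,
    Sym2.card_toFinset_of_not_isDiag _ hq]

theorem pairwiseDisjoint_spokes (hA : IsMatching A) :
    ((A ×ˢ (matchingVerts A)ᶜ : Finset _) : Set (Sym2 (Fin n) × Fin n)).PairwiseDisjoint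
      spokes := by
  rintro ⟨f, z⟩ hq ⟨f', z'⟩ hq' hne
  simp only [coe_product, Set.mem_prod, mem_coe, mem_compl] at hq hq'
  refine disjoint_left.2 fun c hc hc' => ?_
  obtain ⟨u, hu, rfl⟩ := mem_image.1 hc
  obtain ⟨u', hu', heq⟩ := mem_image.1 hc'
  rw [Sym2.mem_toFinset] at hu hu'
  rcases Sym2.eq_iff.1 heq with ⟨rfl, rfl⟩ | ⟨rfl, rfl⟩
  · by_cases hff : f = f'
    · exact hne (by rw [hff])
    · exact hA.2 f' hq'.1 f hq.1 (Ne.symm hff) u' hu' hu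
  · exact hq.2 (mem_matchingVerts A hq'.1 hu')

variable (A) in
noncomputable def commonNbrPairs (ω : Sym2 (Fin n) → Bool) : Finset (Sym2 (Fin n) × Fin n) :=
  {q ∈ A ×ˢ univ | q.2 ∉ q.1 ∧ ∀ u ∈ q.1, Adj ω u q.2}

variable (ω : Sym2 (Fin n) → Bool)

theorem sum_commonNbrs_eq_card_commonNbrPairs :
    ∑ f ∈ A, commonNbrs ω f = #(commonNbrPairs A ω) := by
  simp only [commonNbrPairs, commonNbrs, card_filter, sum_product]

theorem card_commonNbrPairs_notMem_le :
    #{q ∈ commonNbrPairs A ω | q.2 ∉ matchingVerts A}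
      ≤ #{q ∈ A ×ˢ (matchingVerts A)ᶜ | ∀ c ∈ spokes q, ω c = true} := by
  refine card_le_card fun q hq => ?_
  obtain ⟨hqW, hqV⟩ := mem_filter.1 hq
  obtain ⟨hqA, -, hadj⟩ := mem_filter.1 hqW
  refine mem_filter.2 ⟨mem_product.2 ⟨(mem_product.1 hqA).1, mem_compl.2 hqV⟩, ?_⟩
  intro c hc
  obtain ⟨u, hu, rfl⟩ := mem_image.1 hc
  exact (hadj u (Sym2.mem_toFinset.1 hu)).2

/-- `(f, z) ↦ s(u, z)`, for the chosen endpoint `u` of `f`, is at most two-to-one: `z` is an end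
of the image, and `u` determines `f`. -/
theorem card_commonNbrPairs_mem_le (hA : IsMatching A) :
    #{q ∈ commonNbrPairs A ω | q.2 ∈ matchingVerts A}
      ≤ 2 * #{c ∈ (matchingVerts A).sym2 | ω c = true} := by
  have hWA : ∀ q ∈ commonNbrPairs A ω, q.1 ∈ A :=
    fun q hq => (mem_product.1 (mem_filter.1 hq).1).1
  refine card_le_mul_card_image_of_maps_to (f := fun q => s(q.1.out.1, q.2)) ?_ 2 ?_
  · intro q hq
    obtain ⟨hqW, hqV⟩ := mem_filter.1 hq
    obtain ⟨-, -, hadj⟩ := mem_filter.1 hqW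
    refine mem_filter.2 ⟨mem_sym2_iff.2 fun x hx => ?_, (hadj _ (Sym2.out_fst_mem _)).2⟩
    rcases Sym2.mem_iff.1 hx with rfl | rfl
    exacts [mem_matchingVerts A (hWA q hqW) (Sym2.out_fst_mem _), hqV]
  · intro c _
    refine (card_le_card_of_injOn Prod.snd (fun q hq => ?_) fun q hq q' hq' hqq' => ?_).trans
      c.card_toFinset_le_two
    · obtain ⟨-, rfl⟩ := mem_filter.1 hq
      exact Sym2.mem_toFinset.2 (Sym2.mem_mk_right _ _)
    · obtain ⟨hqW, hqc⟩ := mem_filter.1 hq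
      obtain ⟨hqW', hqc'⟩ := mem_filter.1 hq'
      have heq := hqc.trans hqc'.symm
      rw [hqq', Sym2.congr_left] at heq
      refine Prod.ext ?_ hqq'
      by_contra hff
      exact hA.2 _ (hWA q' (mem_filter.1 hqW').1) _ (hWA q (mem_filter.1 hqW).1) (Ne.symm hff) _
        (Sym2.out_fst_mem _) (heq ▸ Sym2.out_fst_mem _)

theorem sum_commonNbrs_le (hA : IsMatching A) :
    ∑ f ∈ A, commonNbrs ω f ≤ #{q ∈ A ×ˢ (matchingVerts A)ᶜ | ∀ c ∈ spokes q, ω c = true}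
      + 2 * #{c ∈ (matchingVerts A).sym2 | ω c = true} := by
  rw [sum_commonNbrs_eq_card_commonNbrPairs,
    ← card_filter_add_card_filter_not (fun q => q.2 ∉ matchingVerts A)]
  simp only [not_not]
  exact add_le_add (card_commonNbrPairs_notMem_le ω) (card_commonNbrPairs_mem_le ω hA)

end FixedMatching

section FixedMatchingProbability

variable {n : ℕ} {p : ℝ≥0} (hp : p ≤ 1) {A : Finset (Sym2 (Fin n))}

theorem erMeasure_sum_commonNbrs_ge_le (hA : IsMatching A) {a : ℕ} (ha : #A ≤ a) (r : ℕ) :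
    erMeasure n p hp {ω | 3 * r ≤ ∑ f ∈ A, commonNbrs ω f}
      ≤ ((a * n).choose r : ℝ≥0∞) * (p : ℝ≥0∞) ^ (2 * r)
        + ((4 * a ^ 2).choose r : ℝ≥0∞) * (p : ℝ≥0∞) ^ r := by
  have hsub : {ω | 3 * r ≤ ∑ f ∈ A, commonNbrs ω f} ⊆
      {ω | r ≤ #{q ∈ A ×ˢ (matchingVerts A)ᶜ | ∀ c ∈ spokes q, ω c = true}} ∪
      {ω | r ≤ #{c ∈ (matchingVerts A).sym2 | ∀ c' ∈ ({c} : Finset _), ω c' = true}} := by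
    intro ω hω
    have := sum_commonNbrs_le ω hA
    simp only [mem_singleton, forall_eq, Set.mem_union, Set.mem_ofPred_eq] at hω ⊢
    omega
  have hout := erMeasure_le_choose_mul_pow hp (A ×ˢ (matchingVerts A)ᶜ) spokes
    (pairwiseDisjoint_spokes hA) 2 r fun q hq => (card_spokes (hA.1 _ (mem_product.1 hq).1)).ge
  have hin := erMeasure_le_choose_mul_pow hp (matchingVerts A).sym2 (fun c => {c})
    (fun c _ c' _ h => disjoint_singleton.2 h) 1 r fun c _ => (card_singleton c).ge
  rw [one_mul] at hin
  refine (measure_mono hsub).trans <| (measure_union_le _ _).trans <|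
    add_le_add (hout.trans ?_) (hin.trans ?_) <;> gcongr
  · calc #(A ×ˢ (matchingVerts A)ᶜ) = #A * #(matchingVerts A)ᶜ := card_product _ _
      _ ≤ a * n := Nat.mul_le_mul ha ((card_le_univ _).trans_eq (Fintype.card_fin n))
  · calc #(matchingVerts A).sym2 ≤ #(matchingVerts A) ^ 2 := card_sym2_le_sq _
      _ ≤ (2 * a) ^ 2 := Nat.pow_le_pow_left ((card_matchingVerts_le A).trans (by omega)) 2
      _ = 4 * a ^ 2 := by ring

end FixedMatchingProbability

theorem erMeasure_triBadEdgeGoodVerts_gt_le {ε : ℝ} (hε : 0 < ε) {n : ℕ} (hn : 0 < n)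
    {p : ℝ≥0} (hp : p ≤ 1) (hp0 : 0 < p) (hp1 : p < 1) {a : ℕ}
    (ha : n * p * Real.log (1 / p) ≤ a) {r : ℕ} (hr : 3 * r ≤ ε * (n : ℝ) ^ 2 * (p : ℝ) ^ 2) :
    erMeasure n p hp {ω | 15 * ε * (n : ℝ) ^ 3 * (p : ℝ) ^ 3 < triBadEdgeGoodVerts ε p ω}
      ≤ ((a + 1) * (n ^ 2) ^ a : ℕ) * (((a * n).choose r : ℝ≥0∞) * (p : ℝ≥0∞) ^ (2 * r)
        + ((4 * a ^ 2).choose r : ℝ≥0∞) * (p : ℝ≥0∞) ^ r) := by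
  set 𝒜 : Finset (Finset (Sym2 (Fin n))) := {A | IsMatching A ∧ #A ≤ a}
  have hcover : {ω | 15 * ε * (n : ℝ) ^ 3 * (p : ℝ) ^ 3 < triBadEdgeGoodVerts ε p ω} ⊆
      ⋃ A ∈ 𝒜, {ω | 3 * r ≤ ∑ f ∈ A, commonNbrs ω f} := by
    intro ω hω
    obtain ⟨A, hA, hAa, hsum⟩ :=
      exists_isMatching_le_sum_commonNbrs ε p ω hε hn (by exact_mod_cast hp0) hp1 ha hω
    refine Set.mem_biUnion (mem_filter.2 ⟨mem_univ _, hA, hAa⟩) ?_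
    exact_mod_cast hr.trans hsum
  have hcard : #𝒜 ≤ (a + 1) * (n ^ 2) ^ a := by
    refine (card_le_card fun A hA => mem_filter.2 ⟨mem_univ _, (mem_filter.1 hA).2.2⟩).trans <|
      (card_filter_card_le ?_ a).trans ?_
    · exact Fintype.card_pos_iff.2 ⟨s(⟨0, hn⟩, ⟨0, hn⟩)⟩
    · gcongr
      exact card_sym2_fin_le n
  calc _ ≤ ∑ A ∈ 𝒜, erMeasure n p hp {ω | 3 * r ≤ ∑ f ∈ A, commonNbrs ω f} :=
        (measure_mono hcover).trans (measure_biUnion_finset_le _ _)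
    _ ≤ ∑ _A ∈ 𝒜, (((a * n).choose r : ℝ≥0∞) * (p : ℝ≥0∞) ^ (2 * r)
        + ((4 * a ^ 2).choose r : ℝ≥0∞) * (p : ℝ≥0∞) ^ r) :=
        sum_le_sum fun A hA => erMeasure_sum_commonNbrs_ge_le hp (mem_filter.1 hA).2.1
          (mem_filter.1 hA).2.2 r
    _ ≤ _ := by
        rw [sum_const, nsmul_eq_mul]
        gcongr

section Estimates

theorem choose_mul_pow_le (N : ℕ) {r : ℕ} (hr : 0 < r) {y B : ℝ} (hy : 0 ≤ y)
    (hNy : N * y ≤ B) : (N.choose r : ℝ) * y ^ r ≤ (exp 1 * B / r) ^ r := by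
  have hr' : (0 : ℝ) < r := by exact_mod_cast hr
  have hfact : (r : ℝ) ^ r / r.factorial ≤ exp r := pow_div_factorial_le_exp _ hr'.le r
  calc (N.choose r : ℝ) * y ^ r ≤ (N : ℝ) ^ r / r.factorial * y ^ r := by
        gcongr
        exact Nat.choose_le_pow_div r N
    _ = (N * y) ^ r / r ^ r * ((r : ℝ) ^ r / r.factorial) := by
        field_simp
        ring
    _ ≤ (N * y) ^ r / r ^ r * exp r := by gcongr
    _ = (exp 1 * (N * y) / r) ^ r := by
        rw [div_pow, mul_pow (exp 1), ← exp_nat_mul, mul_one]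
        ring
    _ ≤ (exp 1 * B / r) ^ r := by gcongr

theorem sq_le_exp_div_four {L : ℝ} (hL : 0 ≤ L) : L ^ 2 ≤ 64 * exp (L / 4) := by
  have h := add_one_le_exp (L / 8)
  calc L ^ 2 ≤ 64 * (L / 8 + 1) ^ 2 := by nlinarith
    _ ≤ 64 * exp (L / 8) ^ 2 := by gcongr
    _ = 64 * exp (L / 4) := by rw [← exp_nat_mul]; ring_nf

theorem base_le_exp_neg_half {ε x L : ℝ} {a r : ℕ} (hε : 0 < ε) (hx : 0 < x) (hL : 0 ≤ L)
    (hεL : 6144 * exp 1 ≤ ε * exp (L / 4)) (ha : a ≤ 2 * x * L) (hr : ε * x ^ 2 / 6 ≤ r) :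
    exp 1 * (4 * a ^ 2 * exp (-L)) / r ≤ exp (-(L / 2)) := by
  have hr0 : (0 : ℝ) < r := lt_of_lt_of_le (by positivity) hr
  have hsq := sq_le_exp_div_four hL
  have hexp : exp (-L) * exp (L / 4) * exp (L / 4) = exp (-(L / 2)) := by
    rw [← exp_add, ← exp_add]; ring_nf
  rw [div_le_iff₀ hr0]
  calc exp 1 * (4 * a ^ 2 * exp (-L)) ≤ exp 1 * (4 * (2 * x * L) ^ 2 * exp (-L)) := by
        gcongr
    _ = 16 * x ^ 2 * (exp 1 * L ^ 2 * exp (-L)) := by ring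
    _ ≤ 16 * x ^ 2 * (exp 1 * (64 * exp (L / 4)) * exp (-L)) := by gcongr
    _ = x ^ 2 / 6 * (6144 * exp 1) * (exp (-L) * exp (L / 4)) := by ring
    _ ≤ x ^ 2 / 6 * (ε * exp (L / 4)) * (exp (-L) * exp (L / 4)) := by gcongr
    _ = exp (-(L / 2)) * (ε * x ^ 2 / 6) := by rw [← hexp]; ring
    _ ≤ exp (-(L / 2)) * r := by gcongr

theorem two_mul_succ_mul_pow_le_exp {C x L : ℝ} {n a : ℕ} (hn : 0 < n) (hxL : 1 ≤ x * L)
    (hCx : 1 ≤ C * x) (hlog : Real.log n ≤ C * x) (ha : a ≤ 2 * x * L) :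
    2 * ((a + 1) * (n ^ 2) ^ a : ℕ) ≤ exp (7 * C * x ^ 2 * L) := by
  have htwo : (2 : ℝ) ≤ exp 1 := by linarith [add_one_le_exp (1 : ℝ)]
  have hpow : ((n : ℝ) ^ 2) ^ a = exp (2 * a * Real.log n) := by
    rw [← Real.exp_log (by positivity : (0 : ℝ) < ((n : ℝ) ^ 2) ^ a), Real.log_pow,
      Real.log_pow]
    ring_nf
  have hlogn := Real.log_nonneg (by exact_mod_cast hn : (1 : ℝ) ≤ n)
  have halog : a * Real.log n ≤ 2 * x * L * (C * x) := mul_le_mul ha hlog hlogn (by linarith)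
  have hxL' : x * L ≤ C * x * (x * L) := le_mul_of_one_le_left (by linarith) hCx
  push_cast
  calc 2 * (((a : ℝ) + 1) * ((n : ℝ) ^ 2) ^ a) = 2 * ((a : ℝ) + 1) * ((n : ℝ) ^ 2) ^ a := by
        ring
    _ ≤ exp 1 * exp (a : ℝ) * exp (2 * a * Real.log n) := by
        rw [hpow]
        gcongr
        exact add_one_le_exp _
    _ = exp (a + 1 + 2 * a * Real.log n) := by rw [← exp_add, ← exp_add]; ring_nf
    _ ≤ exp (7 * C * x ^ 2 * L) := by
        gcongr
        linarith

theorem choose_mul_pow_add_choose_mul_pow_le {L x p : ℝ} {n a r : ℕ} (hr : 0 < r) (hp0 : 0 < p)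
    (hx : n * p = x) (hxa : x ≤ a) (hbase : exp 1 * (4 * a ^ 2 * p) / r ≤ exp (-(L / 2))) :
    ((a * n).choose r : ℝ) * p ^ (2 * r) + ((4 * a ^ 2).choose r : ℝ) * p ^ r
      ≤ 2 * exp (r * -(L / 2)) := by
  have hchoose : ∀ (N : ℕ) (y : ℝ), 0 ≤ y → N * y ≤ 4 * a ^ 2 * p →
      (N.choose r : ℝ) * y ^ r ≤ exp (r * -(L / 2)) := fun N y hy hNy =>
    (choose_mul_pow_le N hr hy hNy).trans <|
      (pow_le_pow_left₀ (by positivity) hbase r).trans_eq (exp_nat_mul _ r).symm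
  have h₁ := hchoose (a * n) (p ^ 2) (by positivity) <| by
    calc ((a * n : ℕ) : ℝ) * p ^ 2 = a * x * p := by rw [← hx]; push_cast; ring
      _ ≤ a * a * p := by gcongr
      _ ≤ 4 * a ^ 2 * p := by nlinarith
  have h₂ := hchoose (4 * a ^ 2) p hp0.le (by push_cast; rfl)
  rw [pow_mul]
  linarith

theorem matching_union_bound_le_exp {ε C L x p : ℝ} {n a r : ℕ} (hε : 0 < ε) (hn : 0 < n)
    (hpL : p = exp (-L)) (hx : n * p = x) (hL : 1 ≤ L) (hC : C ≤ ε / 96) (hC1 : C ≤ 1)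
    (hCx : 1 ≤ C * x) (hlog : Real.log n ≤ C * x) (hεL : 6144 * exp 1 ≤ ε * exp (L / 4))
    (ha₁ : x * L ≤ a) (ha₂ : a ≤ 2 * x * L) (hr : ε * x ^ 2 / 6 ≤ r) :
    ((a + 1) * (n ^ 2) ^ a : ℕ) * (((a * n).choose r : ℝ) * p ^ (2 * r)
      + ((4 * a ^ 2).choose r : ℝ) * p ^ r) ≤ exp (-C * x ^ 2 * L) := by
  have hp0 : 0 < p := hpL ▸ exp_pos _
  have hx0 : 0 < x := hx ▸ by positivity
  have hx1 : 1 ≤ x := hCx.trans (by nlinarith)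
  have hxa : x ≤ a := le_trans (by nlinarith) ha₁
  have hr0 : 0 < r := Nat.cast_pos.1 (lt_of_lt_of_le (by positivity) hr)
  have hbase := base_le_exp_neg_half hε hx0 (by linarith) hεL ha₂ hr
  rw [← hpL] at hbase
  have hterms := choose_mul_pow_add_choose_mul_pow_le hr0 hp0 hx hxa hbase
  have hexp : exp (r * -(L / 2)) ≤ exp (-(8 * C * x ^ 2 * L)) := by
    rw [exp_le_exp]
    nlinarith [mul_le_mul_of_nonneg_right hr (by linarith : (0 : ℝ) ≤ L / 2),
      mul_le_mul_of_nonneg_right hC (by positivity : (0 : ℝ) ≤ x ^ 2 * L)]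
  have hpre := two_mul_succ_mul_pow_le_exp hn (by nlinarith) hCx hlog ha₂
  calc ((a + 1) * (n ^ 2) ^ a : ℕ) * (((a * n).choose r : ℝ) * p ^ (2 * r)
        + ((4 * a ^ 2).choose r : ℝ) * p ^ r)
      ≤ ((a + 1) * (n ^ 2) ^ a : ℕ) * (2 * exp (-(8 * C * x ^ 2 * L))) := by
        gcongr
        exact hterms.trans (by gcongr)
    _ = 2 * ((a + 1) * (n ^ 2) ^ a : ℕ) * exp (-(8 * C * x ^ 2 * L)) := by ring
    _ ≤ exp (7 * C * x ^ 2 * L) * exp (-(8 * C * x ^ 2 * L)) := by gcongr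
    _ = exp (-C * x ^ 2 * L) := by rw [← exp_add]; ring_nf

end Estimates

section Constant

/-- `ε / 96` pays for the union bound over matchings, `(ε / (6144 e))⁴` makes the base of the
binomial bounds at most `√p`. -/
noncomputable def tailConst (ε : ℝ) : ℝ :=
  min (min (ε / 96) (exp (-1))) ((ε / (6144 * exp 1)) ^ 4)

variable {ε : ℝ}

theorem tailConst_pos (hε : 0 < ε) : 0 < tailConst ε := by
  unfold tailConst
  positivity

theorem tailConst_le : tailConst ε ≤ ε / 96 ∧ tailConst ε ≤ 1 :=
  ⟨(min_le_left _ _).trans (min_le_left _ _), ((min_le_left _ _).trans (min_le_right _ _)).trans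
    (exp_le_one_iff.2 (by norm_num))⟩

theorem log_le_tailConst_mul (hε : 0 < ε) {n : ℕ} (hn : 3 ≤ n) {p : ℝ}
    (hlow : (tailConst ε)⁻¹ * Real.log n / n ≤ p) :
    Real.log n ≤ tailConst ε * (n * p) ∧ 1 ≤ tailConst ε * (n * p) := by
  have hC := tailConst_pos hε
  have hn' : (3 : ℝ) ≤ n := by exact_mod_cast hn
  have hlog : Real.log n ≤ tailConst ε * (n * p) := by
    rw [div_le_iff₀ (by positivity), inv_mul_le_iff₀ hC] at hlow
    linarith
  refine ⟨hlog, le_trans ?_ hlog⟩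
  rw [Real.le_log_iff_exp_le (by positivity)]
  linarith [exp_one_lt_d9]

theorem one_le_log_inv_of_le_tailConst (hε : 0 < ε) {p : ℝ} (hp0 : 0 < p)
    (hup : p ≤ tailConst ε) :
    1 ≤ Real.log (1 / p) ∧ 6144 * exp 1 ≤ ε * exp (Real.log (1 / p) / 4) := by
  have hp1 : p ≤ exp (-1) := hup.trans ((min_le_left _ _).trans (min_le_right _ _))
  have hp4 : p ≤ (ε / (6144 * exp 1)) ^ 4 := hup.trans (min_le_right _ _)
  refine ⟨?_, ?_⟩
  · rw [Real.le_log_iff_exp_le (by positivity), le_div_iff₀ hp0]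
    calc exp 1 * p ≤ exp 1 * exp (-1) := by gcongr
      _ = 1 := by rw [← exp_add]; simp
  · rw [← div_le_iff₀' hε]
    refine le_of_pow_le_pow_left₀ (by norm_num : 4 ≠ 0) (by positivity) ?_
    rw [← exp_nat_mul, show ((4 : ℕ) : ℝ) * (Real.log (1 / p) / 4) = Real.log (1 / p) by ring,
      exp_log (by positivity), div_pow, le_div_iff₀ hp0]
    calc (6144 * exp 1) ^ 4 / ε ^ 4 * p
        ≤ (6144 * exp 1) ^ 4 / ε ^ 4 * (ε / (6144 * exp 1)) ^ 4 := by gcongr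
      _ = 1 := by field_simp

end Constant

theorem erMeasure_triBadEdgeGoodVerts_gt_le_exp {ε C : ℝ} (hε : 0 < ε) {n : ℕ} (hn : 0 < n)
    {p : ℝ≥0} (hp : p ≤ 1) (hp0 : (0 : ℝ) < p) (hL : 1 ≤ Real.log (1 / p)) (hC : C ≤ ε / 96)
    (hC1 : C ≤ 1) (hCx : 1 ≤ C * (n * p)) (hlog : Real.log n ≤ C * (n * p))
    (hεL : 6144 * exp 1 ≤ ε * exp (Real.log (1 / p) / 4)) :
    erMeasure n p hp {ω | 15 * ε * (n : ℝ) ^ 3 * (p : ℝ) ^ 3 < triBadEdgeGoodVerts ε p ω}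
      ≤ ENNReal.ofReal (exp (-C * (n : ℝ) ^ 2 * (p : ℝ) ^ 2 * Real.log (1 / p))) := by
  have hpL : (p : ℝ) = exp (-Real.log (1 / p)) := by
    rw [one_div, Real.log_inv, neg_neg, exp_log hp0]
  set x := (n : ℝ) * p with hx
  set L := Real.log (1 / (p : ℝ))
  have hx0 : 0 < x := mul_pos (Nat.cast_pos.2 hn) hp0
  have hx1 : 1 ≤ x := hCx.trans (by nlinarith)
  have hεx : 6 ≤ ε * x ^ 2 := by nlinarith
  set a := ⌈x * L⌉₊
  set r := ⌊ε * x ^ 2 / 3⌋₊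
  have ha : (a : ℝ) ≤ 2 * x * L := by
    linarith [Nat.ceil_lt_add_one (by positivity : 0 ≤ x * L),
      one_le_mul_of_one_le_of_one_le hx1 hL]
  have hr : ε * x ^ 2 / 6 ≤ r := by linarith [Nat.lt_floor_add_one (ε * x ^ 2 / 3)]
  have hr' : 3 * (r : ℝ) ≤ ε * n ^ 2 * p ^ 2 := by
    rw [show ε * (n : ℝ) ^ 2 * p ^ 2 = ε * x ^ 2 by ring]
    linarith [Nat.floor_le (by positivity : 0 ≤ ε * x ^ 2 / 3)]
  have hbound := matching_union_bound_le_exp hε hn hpL hx.symm hL hC hC1 hCx hlog hεL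
    (Nat.le_ceil _) ha hr
  refine (erMeasure_triBadEdgeGoodVerts_gt_le hε hn hp (by exact_mod_cast hp0)
    (by rw [← NNReal.coe_lt_one, hpL]; exact exp_lt_one_iff.2 (by linarith)) (Nat.le_ceil (x * L))
    hr').trans <|
    (le_of_eq ?_).trans (ENNReal.ofReal_le_ofReal (hbound.trans_eq (by rw [hx]; ring_nf)))
  rw [ENNReal.ofReal_mul (by positivity), ENNReal.ofReal_add (by positivity) (by positivity),
    ENNReal.ofReal_mul (by positivity), ENNReal.ofReal_mul (by positivity),
    ENNReal.ofReal_pow p.coe_nonneg, ENNReal.ofReal_pow p.coe_nonneg, ENNReal.ofReal_natCast]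
  simp

/-- **Proposition 5.3**: upper tail for the number of triangles with at least one bad edge
but all good vertices. -/
theorem T0_tail (ε : ℝ) (hε : 0 < ε) :
    ∃ C : ℝ, 0 < C ∧ ∀ (n : ℕ) (p : ℝ≥0) (hp : p ≤ 1),
      C⁻¹ * Real.log n / n ≤ (p : ℝ) → (p : ℝ) ≤ C →
      erMeasure n p hp
          {ω | 15 * ε * (n : ℝ) ^ 3 * (p : ℝ) ^ 3 < (triBadEdgeGoodVerts ε (p : ℝ) ω : ℝ)}
        ≤ ENNReal.ofReal
            (Real.exp (-C * (n : ℝ) ^ 2 * (p : ℝ) ^ 2 * Real.log (1 / (p : ℝ)))) := by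
  refine ⟨tailConst ε, tailConst_pos hε, fun n p hp hlow hup => ?_⟩
  rcases lt_or_ge n 3 with hn | hn
  · have h0 : (0 : ℝ) ≤ 15 * ε * n ^ 3 * p ^ 3 := by positivity
    simp [triBadEdgeGoodVerts_eq_zero _ hn, not_lt.2 h0]
  obtain ⟨hlog, hCx⟩ := log_le_tailConst_mul hε hn hlow
  have hp0 : (0 : ℝ) < p := pos_of_mul_pos_right
    (pos_of_mul_pos_right (by linarith) (tailConst_pos hε).le) (Nat.cast_nonneg n)
  obtain ⟨hL, hεL⟩ := one_le_log_inv_of_le_tailConst hε hp0 hup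
  exact erMeasure_triBadEdgeGoodVerts_gt_le_exp hε (by omega) hp hp0 hL tailConst_le.1
    tailConst_le.2 hCx hlog hεL
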